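/- Let Λ be a primitive nondegenerate sublattice of an even unimodular lattice L, let h ∈ Λ ⊗ ℝ be very irrational, and let β ∈ L with β ⊥ h (in L ⊗ ℝ). Then β ∈ Λ^⊥ = {v ∈ L : v·λ = 0 for all λ ∈ Λ}. -/

import Mathlib

/-! If `β ⊥ m` failed for some `m ∈ Λ`, then `Λ' = Λ ∩ β^⊥` would be a proper saturated
sublattice of `Λ`. Since `β · Λ ⊆ ℤ`, the real span of `Λ'` is the whole hyperplane
`(Λ ⊗ ℝ) ∩ β^⊥`, which contains `h`; this contradicts the irrationality of `h`. -/

open Submodule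

section IntegralFunctional

variable {K V : Type*} [Field K] [AddCommGroup V] [Module K V]

theorem saturated_inf_ker_restrictScalars [CharZero K] (f : V →ₗ[K] K) (Λ : Submodule ℤ V)
    (n : ℤ) (x : V) (hx : x ∈ Λ) (hnx : n • x ∈ Λ ⊓ LinearMap.ker (f.restrictScalars ℤ))
    (hn : n ≠ 0) : x ∈ Λ ⊓ LinearMap.ker (f.restrictScalars ℤ) := by
  refine ⟨hx, ?_⟩
  have hfnx : n • f x = 0 := by simpa using hnx.2
  simpa [hn] using hfnx

theorem mem_span_inf_ker_of_forall_eq_intCast (f : V →ₗ[K] K) (Λ : Submodule ℤ V)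
    (hf : ∀ x ∈ Λ, ∃ k : ℤ, f x = k) {x : V} (hx : x ∈ span K (Λ : Set V)) (hfx : f x = 0) :
    x ∈ span K ((Λ ⊓ LinearMap.ker (f.restrictScalars ℤ) : Submodule ℤ V) : Set V) := by
  set Λ' := Λ ⊓ LinearMap.ker (f.restrictScalars ℤ)
  by_cases hΛ : Λ ≤ LinearMap.ker (f.restrictScalars ℤ)
  · rwa [show Λ' = Λ from inf_eq_left.mpr hΛ]
  obtain ⟨m, hm, hfm⟩ := SetLike.not_le_iff_exists.mp hΛ
  obtain ⟨c, hc⟩ := hf m hm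
  have hc0 : (c : K) ≠ 0 := hc ▸ hfm
  -- the projection onto `ker f` along `m`
  let p : V →ₗ[K] V := LinearMap.id - ((c : K)⁻¹ • f).smulRight m
  have hp : span K (Λ : Set V) ≤ (span K (Λ' : Set V)).comap p := by
    refine span_le.mpr fun y hy => ?_
    obtain ⟨k, hk⟩ := hf y hy
    have hΛ'y : c • y - k • m ∈ Λ' := by
      refine ⟨sub_mem (smul_mem _ _ hy) (smul_mem _ _ hm), ?_⟩
      simp [hk, hc, mul_comm]
    have hpy : p y = (c : K)⁻¹ • (c • y - k • m) := by
      simp only [p, LinearMap.sub_apply, LinearMap.id_apply, LinearMap.smulRight_apply,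
        LinearMap.smul_apply, hk, smul_eq_mul, smul_sub, ← Int.cast_smul_eq_zsmul K, smul_smul,
        inv_mul_cancel₀ hc0, one_smul]
    rw [SetLike.mem_coe, mem_comap, hpy]
    exact smul_mem _ _ (subset_span hΛ'y)
  simpa [p, hfx] using hp hx

end IntegralFunctional

theorem perp_of_very_irrational_general {V : Type*} [AddCommGroup V] [Module ℝ V]
    (B : V →ₗ[ℝ] V →ₗ[ℝ] ℝ)
    (L Λ : Submodule ℤ V) (hΛL : Λ ≤ L)
    (hint : ∀ v ∈ L, ∀ w ∈ L, ∃ k : ℤ, B v w = k)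
    (h : V) (hmem : h ∈ Submodule.span ℝ (Λ : Set V))
    (hirr : ∀ Λ' : Submodule ℤ V, Λ' < Λ →
      (∀ (n : ℤ) (x : V), x ∈ Λ → n • x ∈ Λ' → n ≠ 0 → x ∈ Λ') →
      h ∉ Submodule.span ℝ (Λ' : Set V))
    (β : V) (hβ : β ∈ L) (hβh : B β h = 0) :
    ∀ m ∈ Λ, B β m = 0 := by
  by_contra! hΛ
  obtain ⟨m, hm, hβm⟩ := hΛ
  refine hirr (Λ ⊓ LinearMap.ker ((B β).restrictScalars ℤ)) ?_
    (saturated_inf_ker_restrictScalars (B β) Λ)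
    (mem_span_inf_ker_of_forall_eq_intCast (B β) Λ (fun x hx => hint β hβ x (hΛL hx)) hmem hβh)
  exact inf_lt_left.mpr fun hle => hβm (hle hm)

/-- Let `Λ` be a primitive nondegenerate sublattice of an even nondegenerate
lattice `L`, let `h ∈ Λ ⊗ ℝ` be very irrational, and let `β ∈ L` with
`β ⊥ h`.  Then `β ∈ Λ^⊥`, i.e. `β` is orthogonal to every element of `Λ`. -/
theorem perp_of_very_irrational {V : Type*} [AddCommGroup V] [Module ℝ V]
    (B : V →ₗ[ℝ] V →ₗ[ℝ] ℝ) (hsymm : ∀ v w : V, B v w = B w v)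
    (L Λ : Submodule ℤ V) (hΛL : Λ ≤ L)
    (heven : ∀ v ∈ L, ∃ k : ℤ, B v v = 2 * k)
    (hint : ∀ v ∈ L, ∀ w ∈ L, ∃ k : ℤ, B v w = k)
    (hLnondeg : ∀ v ∈ L, (∀ w ∈ L, B v w = 0) → v = 0)
    (hΛnondeg : ∀ v ∈ Λ, (∀ w ∈ Λ, B v w = 0) → v = 0)
    (hprim : ∀ (n : ℤ) (x : V), x ∈ L → n • x ∈ Λ → n ≠ 0 → x ∈ Λ)
    (h : V) (hmem : h ∈ Submodule.span ℝ (Λ : Set V))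
    (hirr : ∀ Λ' : Submodule ℤ V, Λ' < Λ →
      (∀ (n : ℤ) (x : V), x ∈ Λ → n • x ∈ Λ' → n ≠ 0 → x ∈ Λ') →
      h ∉ Submodule.span ℝ (Λ' : Set V))
    (β : V) (hβ : β ∈ L) (hβh : B β h = 0) :
    ∀ m ∈ Λ, B β m = 0 :=
  perp_of_very_irrational_general B L Λ hΛL hint h hmem hirr β hβ hβh
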